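/- Let P be a stochastic matrix of a finite irreducible Markov chain with P(x,x) > 0 for every state x. Then for every complex eigenvalue λ of P with |λ| = 1 one has λ = 1, and for any eigenvector f of an eigenvalue of modulus 1, |f| is constant. -/

import Mathlib

/-! Since |λ| = 1, the modulus |f| is subharmonic: |f x| = |λ f x| ≤ ∑ P x y |f y|. By the
maximum principle the set where |f| attains its maximum is closed under the transitions of P,
so by irreducibility |f| is constant. Then λ f x = ∑ P x y f y is a convex combination of
points of the circle of radius |f x| which itself lies on that circle; strict convexity of the
disc forces every f y with P x y > 0 to equal λ f x, and laziness (P x x > 0) gives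
f x = λ f x, i.e. λ = 1. -/

open Finset

theorem eq_of_le_sum_mul_of_forall_le {ι R : Type*} [Field R] [LinearOrder R]
    [IsStrictOrderedRing R] {s : Finset ι} {w b : ι → R} {a : R}
    (hw : ∀ i ∈ s, 0 ≤ w i) (hw1 : ∑ i ∈ s, w i = 1) (hb : ∀ i ∈ s, b i ≤ a)
    (ha : a ≤ ∑ i ∈ s, w i * b i) {j : ι} (hj : j ∈ s) (hwj : 0 < w j) : b j = a := by
  have hgap_nonneg : ∀ i ∈ s, 0 ≤ w i * (a - b i) := fun i hi =>
    mul_nonneg (hw i hi) (sub_nonneg.2 (hb i hi))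
  have hgap : ∑ i ∈ s, w i * (a - b i) = 0 := by
    refine le_antisymm ?_ (sum_nonneg hgap_nonneg)
    simp only [mul_sub, sum_sub_distrib, ← sum_mul, hw1, one_mul]
    linarith
  have := (sum_eq_zero_iff_of_nonneg hgap_nonneg).1 hgap j hj
  linarith [(mul_eq_zero.1 this).resolve_left hwj.ne']

theorem eq_sum_smul_of_norm_sum_smul_eq {ι E : Type*} [NormedAddCommGroup E]
    [InnerProductSpace ℝ E] {s : Finset ι} {w : ι → ℝ} {z : ι → E} {r : ℝ}
    (hw : ∀ i ∈ s, 0 ≤ w i) (hw1 : ∑ i ∈ s, w i = 1) (hz : ∀ i ∈ s, ‖z i‖ ≤ r)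
    (hr : ‖∑ i ∈ s, w i • z i‖ = r) {j : ι} (hj : j ∈ s) (hwj : w j ≠ 0) :
    z j = ∑ i ∈ s, w i • z i := by
  set c := ∑ i ∈ s, w i • z i
  -- the weighted variance `∑ w i ‖z i - c‖²` equals `∑ w i ‖z i‖² - ‖c‖² ≤ r² - r²`
  have hdev : ∑ i ∈ s, w i * ‖z i - c‖ ^ 2 ≤ 0 := calc
    ∑ i ∈ s, w i * ‖z i - c‖ ^ 2
        ≤ ∑ i ∈ s, w i * (2 * r ^ 2 - 2 * inner ℝ (z i) c) := by
      refine sum_le_sum fun i hi => mul_le_mul_of_nonneg_left ?_ (hw i hi)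
      have := pow_le_pow_left₀ (norm_nonneg _) (hz i hi) 2
      rw [norm_sub_sq_real, hr]
      linarith
    _ = 2 * r ^ 2 - 2 * inner ℝ c c := by
      simp only [c, sum_inner, real_inner_smul_left, mul_sub, sum_sub_distrib, ← sum_mul, hw1,
        mul_sum]
      ring_nf
    _ = 0 := by rw [real_inner_self_eq_norm_sq, hr]; ring
  have := (sum_eq_zero_iff_of_nonneg fun i hi => mul_nonneg (hw i hi) (sq_nonneg _)).1
    (le_antisymm hdev (sum_nonneg fun i hi => mul_nonneg (hw i hi) (sq_nonneg _))) j hj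
  simpa [hwj, sub_eq_zero] using this

namespace Matrix

variable {n R : Type*} [Fintype n] [DecidableEq n]

theorem mem_of_pow_apply_pos [Ring R] [LinearOrder R] [IsStrictOrderedRing R]
    {A : Matrix n n R} (hA : ∀ i j, 0 ≤ A i j) {S : Set n}
    (hS : ∀ i ∈ S, ∀ j, 0 < A i j → j ∈ S) (k : ℕ) {i j : n} (hi : i ∈ S)
    (hij : 0 < (A ^ k) i j) : j ∈ S := by
  induction k generalizing j with
  | zero =>
    obtain rfl : i = j := by by_contra h; simp [one_apply_ne h] at hij
    exact hi
  | succ k ih =>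
    rw [pow_succ, mul_apply,
      sum_pos_iff_of_nonneg fun l _ => mul_nonneg (pow_apply_nonneg hA k i l) (hA l j)] at hij
    obtain ⟨l, -, hl⟩ := hij
    exact hS l (ih (pos_of_mul_pos_left hl (hA l j))) j
      (pos_of_mul_pos_right hl (pow_apply_nonneg hA k i l))

theorem eq_of_le_sum_mul_of_irreducible [Field R] [LinearOrder R] [IsStrictOrderedRing R]
    {P : Matrix n n R} (hnn : ∀ x y, 0 ≤ P x y) (hrow : ∀ x, ∑ y, P x y = 1)
    (hirr : ∀ x y, ∃ k : ℕ, 0 < (P ^ k) x y) {g : n → R} (hg : ∀ x, g x ≤ ∑ y, P x y * g y)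
    (x y : n) : g x = g y := by
  obtain ⟨x₀, -, hmax⟩ := exists_max_image univ g ⟨x, mem_univ x⟩
  have hclosed : ∀ u ∈ {u | g u = g x₀}, ∀ v, 0 < P u v → v ∈ {u | g u = g x₀} :=
    fun u hu v huv => eq_of_le_sum_mul_of_forall_le (fun v _ => hnn u v) (hrow u)
      (fun v _ => hmax v (mem_univ v)) (hu ▸ hg u) (mem_univ v) huv
  have hlevel : ∀ u, g u = g x₀ := fun u =>
    have ⟨k, hk⟩ := hirr x₀ u
    mem_of_pow_apply_pos hnn hclosed k rfl hk
  rw [hlevel x, hlevel y]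

end Matrix

theorem norm_le_sum_mul_norm_of_eigen {V : Type*} [Fintype V] {P : V → V → ℝ}
    (hnn : ∀ x y, 0 ≤ P x y) {lam : ℂ} {f : V → ℂ}
    (heig : ∀ x, ∑ y, (P x y : ℂ) * f y = lam * f x) (hmod : 1 ≤ ‖lam‖) (x : V) :
    ‖f x‖ ≤ ∑ y, P x y * ‖f y‖ := calc
  ‖f x‖ ≤ ‖lam * f x‖ := by
    rw [norm_mul]; exact le_mul_of_one_le_left (norm_nonneg _) hmod
  _ = ‖∑ y, (P x y : ℂ) * f y‖ := by rw [heig]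
  _ ≤ ∑ y, P x y * ‖f y‖ := by
    refine (norm_sum_le _ _).trans_eq (sum_congr rfl fun y _ => ?_)
    rw [norm_mul, Complex.norm_of_nonneg (hnn x y)]

theorem lazy_irreducible_peripheral_spectrum_general
    {V : Type*} [Fintype V] [DecidableEq V]
    (P : Matrix V V ℝ)
    (hnn : ∀ x y, 0 ≤ P x y) (hrow : ∀ x, ∑ y, P x y = 1)
    (hirr : ∀ x y, ∃ n : ℕ, 0 < (P ^ n) x y)
    (hlazy : ∀ x, 0 < P x x)
    (lam : ℂ) (f : V → ℂ) (hf : f ≠ 0)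
    (heig : ∀ x, ∑ y, (P x y : ℂ) * f y = lam * f x)
    (hmod : ‖lam‖ = 1) :
    lam = 1 ∧ ∀ x y, ‖f x‖ = ‖f y‖ := by
  have hconst : ∀ x y, ‖f x‖ = ‖f y‖ :=
    Matrix.eq_of_le_sum_mul_of_irreducible hnn hrow hirr
      (norm_le_sum_mul_norm_of_eigen hnn heig hmod.ge)
  obtain ⟨x, hx⟩ := Function.ne_iff.1 hf
  have heig' : ∑ y, P x y • f y = lam * f x := by simpa only [Complex.real_smul] using heig x
  have hfix : f x = lam * f x := by
    have := eq_sum_smul_of_norm_sum_smul_eq (fun y _ => hnn x y) (hrow x)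
      (fun y _ => (hconst y x).le) (by rw [heig', norm_mul, hmod, one_mul]) (mem_univ x)
      (hlazy x).ne'
    rwa [heig'] at this
  exact ⟨(mul_eq_right₀ hx).1 hfix.symm, hconst⟩

/-- For an irreducible lazy stochastic matrix (P(x,x) > 0 for all x), every
complex eigenvalue of modulus 1 equals 1, and any eigenvector of an eigenvalue
of modulus 1 has constant absolute value. -/
theorem lazy_irreducible_peripheral_spectrum
    {V : Type*} [Fintype V] [DecidableEq V] [Nonempty V]
    (P : Matrix V V ℝ)
    (hnn : ∀ x y, 0 ≤ P x y) (hrow : ∀ x, ∑ y, P x y = 1)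
    (hirr : ∀ x y, ∃ n : ℕ, 0 < (P ^ n) x y)
    (hlazy : ∀ x, 0 < P x x)
    (lam : ℂ) (f : V → ℂ) (hf : f ≠ 0)
    (heig : ∀ x, ∑ y, (P x y : ℂ) * f y = lam * f x)
    (hmod : ‖lam‖ = 1) :
    lam = 1 ∧ ∀ x y, ‖f x‖ = ‖f y‖ :=
  lazy_irreducible_peripheral_spectrum_general P hnn hrow hirr hlazy lam f hf heig hmod
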